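/- arXiv:0901.2524 — 2 statements merged into one kernel-verified Lean document; each statement's English description precedes it below -/
import Mathlib

section
/- Let (X,d,μ) be a space of homogeneous type satisfying the standing assumptions, and let 1 ≤ q ≤ α ≤ p₁ < p₂ < ∞. Then there exist constants C, C' > 0 independent of r such that for every μ-measurable f on X and every r > 0, _r‖f‖_{q,∞,α} ≤ C · _r‖f‖_{q,p₂,α} ≤ C' · _r‖f‖_{q,p₁,α}. -/
/-!
The supremum bound is local. Cover `B(y, r)` by boundedly many balls `B(t, r/(2κ))` (a maximal
separated family, whose size is controlled by packing and doubling). Each small ball lies in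
`B(z, r)` for every `z` in it, so on the small ball the integrand of the `L^p` amalgam norm is
at least the local norm of `f` on the small ball, up to ball measures that doubling makes
comparable up to a fixed power of the doubling constant. Between two finite exponents, the amalgam
norm is an `L^p` norm of `F = localNorm` for the weight `μ(B(y, r))⁻¹`, so
`‖F‖_{p₂} ≤ ‖F‖_∞ ^ (1 - p₁/p₂) ‖F‖_{p₁} ^ (p₁/p₂)`, and `‖F‖_∞` is bounded by the first part.
-/

open MeasureTheory Set ENNReal Filter

noncomputable section

variable {X : Type*}

def qball (d : X → X → ℝ) (x : X) (r : ℝ) : Set X := {y | d x y < r}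

/-- The amalgam-type quantity `_r‖f‖_{q,p,α}` (with the convention `1/∞ = 0`
given by `ENNReal.toReal`). -/
def amalgamNorm [MeasurableSpace X] (μ : Measure X) (d : X → X → ℝ)
    (q p α : ℝ≥0∞) (r : ℝ) (f : X → ℂ) : ℝ≥0∞ :=
  if p = ∞ then
    ⨆ y : X, μ (qball d y r) ^ (1 / α.toReal - 1 / q.toReal) *
      eLpNorm ((qball d y r).indicator f) q μ
  else
    (∫⁻ y, (μ (qball d y r) ^ (1 / α.toReal - 1 / p.toReal - 1 / q.toReal) *
      eLpNorm ((qball d y r).indicator f) q μ) ^ p.toReal ∂μ) ^ (1 / p.toReal)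

theorem ENNReal.rpow_le_rpow_of_nonpos {x y : ℝ≥0∞} {z : ℝ} (hxy : x ≤ y) (hz : z ≤ 0) :
    y ^ z ≤ x ^ z := by
  rw [← neg_neg z, rpow_neg y, rpow_neg x]
  exact ENNReal.inv_le_inv.2 (rpow_le_rpow hxy (neg_nonneg.2 hz))

theorem ENNReal.one_div_toReal_le_one_div_toReal {p q : ℝ≥0∞} (hp : p ≠ 0) (hpq : p ≤ q) :
    1 / q.toReal ≤ 1 / p.toReal := by
  simp only [one_div, ← toReal_inv]
  exact toReal_mono (inv_ne_top.2 hp) (ENNReal.inv_le_inv.2 hpq)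

theorem ENNReal.one_div_toReal_le_one {p : ℝ≥0∞} (hp : 1 ≤ p) : 1 / p.toReal ≤ 1 := by
  simpa using one_div_toReal_le_one_div_toReal one_ne_zero hp

section Lebesgue

variable {Y : Type*} [MeasurableSpace Y] {μ : Measure Y}

theorem mul_measure_rpow_le_lintegral_rpow {g : Y → ℝ≥0∞} {U : Set Y} (hU : MeasurableSet U)
    {c : ℝ≥0∞} (hc : ∀ z ∈ U, c ≤ g z) {p : ℝ} (hp : 0 < p) :
    c * μ U ^ (1 / p) ≤ (∫⁻ z, g z ^ p ∂μ) ^ (1 / p) := by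
  have hint : c ^ p * μ U ≤ ∫⁻ z, g z ^ p ∂μ :=
    calc c ^ p * μ U = ∫⁻ _ in U, c ^ p ∂μ := (setLIntegral_const U _).symm
      _ ≤ ∫⁻ z in U, g z ^ p ∂μ :=
        setLIntegral_mono' hU fun z hz => rpow_le_rpow (hc z hz) hp.le
      _ ≤ ∫⁻ z, g z ^ p ∂μ := setLIntegral_le_lintegral U _
  calc c * μ U ^ (1 / p) = (c ^ p * μ U) ^ (1 / p) := by
        rw [mul_rpow_of_nonneg _ _ (by positivity), ← rpow_mul, mul_one_div_cancel hp.ne',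
          rpow_one]
    _ ≤ _ := rpow_le_rpow hint (by positivity)

theorem lintegral_rpow_mul_le {g w : Y → ℝ≥0∞} {S : ℝ≥0∞} (hg : ∀ z, g z ≤ S) (hS : S ≠ ∞)
    {p₁ p₂ : ℝ} (hp₁ : 0 ≤ p₁) (hp : p₁ ≤ p₂) :
    ∫⁻ z, g z ^ p₂ * w z ∂μ ≤ S ^ (p₂ - p₁) * ∫⁻ z, g z ^ p₁ * w z ∂μ := by
  rw [← lintegral_const_mul' _ _ (rpow_ne_top_of_nonneg (sub_nonneg.2 hp) hS)]
  refine lintegral_mono fun z => ?_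
  calc g z ^ p₂ * w z = g z ^ (p₂ - p₁) * g z ^ p₁ * w z := by
        rw [← rpow_add_of_nonneg _ _ (sub_nonneg.2 hp) hp₁, sub_add_cancel]
    _ ≤ S ^ (p₂ - p₁) * (g z ^ p₁ * w z) := by
        rw [mul_assoc]; gcongr; exact hg z

theorem eLpNorm_indicator_le_sum_of_subset_biUnion {ι E : Type*} [NormedAddCommGroup E]
    {f : Y → E} (hf : AEStronglyMeasurable f μ) {T : Finset ι} {V : ι → Set Y}
    (hV : ∀ t ∈ T, MeasurableSet (V t)) {U : Set Y} (hU : U ⊆ ⋃ t ∈ T, V t)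
    {q : ℝ≥0∞} (hq : 1 ≤ q) :
    eLpNorm (U.indicator f) q μ ≤ ∑ t ∈ T, eLpNorm ((V t).indicator f) q μ := by
  have hpt : ∀ x, ‖U.indicator f x‖ ≤ (∑ t ∈ T, fun y => ‖(V t).indicator f y‖) x := by
    intro x
    rw [Finset.sum_apply]
    by_cases hx : x ∈ U
    · obtain ⟨t, ht, hxt⟩ := mem_iUnion₂.1 (hU hx)
      rw [indicator_of_mem hx, ← indicator_of_mem hxt f]
      exact Finset.single_le_sum (f := fun t => ‖(V t).indicator f x‖)
        (fun _ _ => norm_nonneg _) ht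
    · rw [indicator_of_notMem hx, norm_zero]
      exact Finset.sum_nonneg fun _ _ => norm_nonneg _
  calc eLpNorm (U.indicator f) q μ ≤ _ := eLpNorm_mono_real hpt
    _ ≤ ∑ t ∈ T, eLpNorm (fun y => ‖(V t).indicator f y‖) q μ :=
      eLpNorm_sum_le (fun t ht => (hf.indicator (hV t ht)).norm) hq
    _ = ∑ t ∈ T, eLpNorm ((V t).indicator f) q μ := by simp only [eLpNorm_norm]

end Lebesgue

section QuasiMetric

variable {d : X → X → ℝ} {κ : ℝ}

theorem qball_mono (d : X → X → ℝ) (x : X) {r R : ℝ} (h : r ≤ R) :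
    qball d x r ⊆ qball d x R :=
  fun _ hw => lt_of_lt_of_le hw h

theorem qball_subset_qball (hκ : 0 < κ) (htri : ∀ x y z, d x y ≤ κ * (d x z + d z y))
    {x y : X} {s r R : ℝ} (hxy : d x y < s) (hR : κ * (s + r) ≤ R) :
    qball d y r ⊆ qball d x R := fun w hw =>
  calc d x w ≤ κ * (d x y + d y w) := htri x w y
    _ < κ * (s + r) := mul_lt_mul_of_pos_left (add_lt_add hxy hw) hκ
    _ ≤ R := hR

theorem pairwiseDisjoint_qball (hκ : 0 < κ) (hsymm : ∀ x y, d x y = d y x)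
    (htri : ∀ x y z, d x y ≤ κ * (d x z + d z y)) {T : Set X} {ρ : ℝ}
    (hT : T.Pairwise fun a b => 2 * κ * ρ ≤ d a b) :
    T.PairwiseDisjoint fun t => qball d t ρ := by
  intro a ha b hb hab
  refine disjoint_left.2 fun w (hwa : d a w < ρ) (hwb : d b w < ρ) => ?_
  have : d a b < 2 * κ * ρ :=
    calc d a b ≤ κ * (d a w + d w b) := htri a b w
      _ < κ * (ρ + ρ) := by rw [hsymm w b]; exact mul_lt_mul_of_pos_left (add_lt_add hwa hwb) hκ
      _ = 2 * κ * ρ := by ring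
  exact (hT ha hb hab).not_gt this

theorem qball_div_subset_qball (hκ : 0 < κ) (hsymm : ∀ x y, d x y = d y x)
    (htri : ∀ x y z, d x y ≤ κ * (d x z + d z y)) {t z : X} {r : ℝ}
    (hz : z ∈ qball d t (r / (2 * κ))) : qball d t (r / (2 * κ)) ⊆ qball d z r :=
  qball_subset_qball hκ htri (by rw [hsymm]; exact hz)
    (le_of_eq (show κ * (r / (2 * κ) + r / (2 * κ)) = r by field_simp; ring))

variable [MeasurableSpace X] {μ : Measure X} {N : ℝ≥0∞}

def MeasureQBallRatioLE (μ : Measure X) (d : X → X → ℝ) (L : ℝ) (N : ℝ≥0∞) : Prop :=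
  ∀ x ρ R, 0 < ρ → R ≤ L * ρ → μ (qball d x R) ≤ N * μ (qball d x ρ)

theorem measureQBallRatioLE_of_doubling {K : ℝ≥0∞}
    (hdouble : ∀ x r, 0 < r → μ (qball d x (2 * r)) ≤ K * μ (qball d x r))
    {L : ℝ} {n : ℕ} (hL : L ≤ 2 ^ n) : MeasureQBallRatioLE μ d L (K ^ n) := by
  suffices h : ∀ n : ℕ, MeasureQBallRatioLE μ d (2 ^ n) (K ^ n) from
    fun x ρ R hρ hR => h n x ρ R hρ (hR.trans (mul_le_mul_of_nonneg_right hL hρ.le))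
  intro n
  induction n with
  | zero =>
    intro x ρ R _ hR
    simpa using measure_mono (qball_mono d x (by simpa using hR))
  | succ n ih =>
    intro x ρ R hρ hR
    calc μ (qball d x R) ≤ μ (qball d x (2 * (2 ^ n * ρ))) :=
          measure_mono (qball_mono d x (by rw [pow_succ] at hR; linarith))
      _ ≤ K * μ (qball d x (2 ^ n * ρ)) := hdouble x _ (by positivity)
      _ ≤ K * (K ^ n * μ (qball d x ρ)) := mul_le_mul_right (ih x ρ _ hρ le_rfl) K
      _ = K ^ (n + 1) * μ (qball d x ρ) := by ring

theorem measure_qball_le_of_mem_qball_div (hκ : 1 ≤ κ)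
    (htri : ∀ x y z, d x y ≤ κ * (d x z + d z y)) (hN : MeasureQBallRatioLE μ d (12 * κ ^ 4) N)
    {t z : X} {r : ℝ} (hr : 0 < r) (hz : z ∈ qball d t (r / (2 * κ))) :
    μ (qball d z r) ≤ N * μ (qball d t (r / (2 * κ))) := by
  have hκ0 : 0 < κ := one_pos.trans_le hκ
  calc μ (qball d z r) ≤ μ (qball d t (κ * (r / (2 * κ) + r))) :=
        measure_mono (qball_subset_qball hκ0 htri hz le_rfl)
    _ ≤ N * μ (qball d t (r / (2 * κ))) := hN t _ _ (by positivity) (by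
        have hL : κ * (r / (2 * κ) + r) = r / 2 + κ * r := by field_simp
        have hR : 12 * κ ^ 4 * (r / (2 * κ)) = 6 * κ ^ 3 * r := by field_simp; ring
        rw [hL, hR]
        nlinarith [mul_le_mul_of_nonneg_right (le_self_pow₀ hκ three_ne_zero) hr.le])

theorem measure_qball_div_le (hκ : 1 ≤ κ) (htri : ∀ x y z, d x y ≤ κ * (d x z + d z y))
    (hN : MeasureQBallRatioLE μ d (12 * κ ^ 4) N) {y t : X} {r : ℝ} (hr : 0 < r)
    (hyt : d y t < r) : μ (qball d t (r / (2 * κ))) ≤ N * μ (qball d y r) := by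
  have hκ0 : 0 < κ := one_pos.trans_le hκ
  calc μ (qball d t (r / (2 * κ))) ≤ μ (qball d y (κ * (r + r / (2 * κ)))) :=
        measure_mono (qball_subset_qball hκ0 htri hyt le_rfl)
    _ ≤ N * μ (qball d y r) := hN y r _ hr (by
        have hL : κ * (r + r / (2 * κ)) = κ * r + r / 2 := by field_simp
        rw [hL]
        nlinarith [mul_le_mul_of_nonneg_right (le_self_pow₀ hκ four_ne_zero) hr.le,
          mul_le_mul_of_nonneg_right (one_le_pow₀ (n := 4) hκ) hr.le])

end QuasiMetric

section Covering

variable [MeasurableSpace X] {μ : Measure X} {d : X → X → ℝ} {κ : ℝ} {N : ℝ≥0∞}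

theorem card_le_of_pairwise_separated (hκ : 1 ≤ κ) (hsymm : ∀ x y, d x y = d y x)
    (htri : ∀ x y z, d x y ≤ κ * (d x z + d z y))
    (hmeas : ∀ x r, MeasurableSet (qball d x r)) (hpos : ∀ x r, 0 < r → 0 < μ (qball d x r))
    (hfin : ∀ x r, μ (qball d x r) < ∞) (hN : MeasureQBallRatioLE μ d (12 * κ ^ 4) N)
    {y : X} {r : ℝ} (hr : 0 < r) {T : Finset X} (hTy : ↑T ⊆ qball d y r)
    (hsep : (↑T : Set X).Pairwise fun a b => r / (2 * κ) ≤ d a b) :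
    (T.card : ℝ≥0∞) ≤ N := by
  have hκ0 : 0 < κ := one_pos.trans_le hκ
  set ρ := r / (4 * κ ^ 2) with hρdef
  have hρ : 0 < ρ := by positivity
  have hρr : ρ ≤ r := div_le_self hr.le (by nlinarith)
  have h2κρ : 2 * κ * ρ = r / (2 * κ) := by rw [hρdef]; field_simp; ring
  have hdisj : (↑T : Set X).PairwiseDisjoint fun t => qball d t ρ :=
    pairwiseDisjoint_qball hκ0 hsymm htri (h2κρ ▸ hsep)
  have hsub : (⋃ t ∈ T, qball d t ρ) ⊆ qball d y (2 * κ * r) :=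
    iUnion₂_subset fun t ht => qball_subset_qball hκ0 htri (hTy ht) (by nlinarith)
  have hlow : ∀ t ∈ T, μ (qball d y (2 * κ * r)) ≤ N * μ (qball d t ρ) := fun t ht =>
    calc μ (qball d y (2 * κ * r)) ≤ μ (qball d t (κ * (r + 2 * κ * r))) :=
          measure_mono <| qball_subset_qball hκ0 htri
            (show d t y < r from hsymm t y ▸ hTy ht) le_rfl
      _ ≤ N * μ (qball d t ρ) := hN t ρ _ hρ (by
          have : 12 * κ ^ 4 * ρ = 3 * κ ^ 2 * r := by rw [hρdef]; field_simp; ring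
          rw [this]; nlinarith [mul_le_mul_of_nonneg_left hκ (mul_nonneg hκ0.le hr.le)])
  have hM0 : μ (qball d y (2 * κ * r)) ≠ 0 := (hpos y _ (by positivity)).ne'
  refine (ENNReal.mul_le_mul_iff_left hM0 (hfin y _).ne).1 ?_
  calc (T.card : ℝ≥0∞) * μ (qball d y (2 * κ * r))
      = ∑ _t ∈ T, μ (qball d y (2 * κ * r)) := by rw [Finset.sum_const, nsmul_eq_mul]
    _ ≤ ∑ t ∈ T, N * μ (qball d t ρ) := Finset.sum_le_sum hlow
    _ = N * μ (⋃ t ∈ T, qball d t ρ) := by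
        rw [← Finset.mul_sum, measure_biUnion_finset hdisj fun t _ => hmeas t ρ]
    _ ≤ N * μ (qball d y (2 * κ * r)) := mul_le_mul_right (measure_mono hsub) N

theorem exists_finset_qball_cover (hκ : 1 ≤ κ) (hsymm : ∀ x y, d x y = d y x)
    (hd0 : ∀ x, d x x = 0) (htri : ∀ x y z, d x y ≤ κ * (d x z + d z y))
    (hmeas : ∀ x r, MeasurableSet (qball d x r)) (hpos : ∀ x r, 0 < r → 0 < μ (qball d x r))
    (hfin : ∀ x r, μ (qball d x r) < ∞) (hN : MeasureQBallRatioLE μ d (12 * κ ^ 4) N)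
    (hNtop : N ≠ ∞) (y : X) {r : ℝ} (hr : 0 < r) :
    ∃ T : Finset X, ↑T ⊆ qball d y r ∧ qball d y r ⊆ ⋃ t ∈ T, qball d t (r / (2 * κ)) ∧
      (T.card : ℝ≥0∞) ≤ N := by
  classical
  have hs : 0 < r / (2 * κ) := by positivity
  suffices ∃ T : Finset X, ↑T ⊆ qball d y r ∧
      (↑T : Set X).Pairwise (fun a b => r / (2 * κ) ≤ d a b) ∧
      qball d y r ⊆ ⋃ t ∈ T, qball d t (r / (2 * κ)) by
    obtain ⟨T, hTy, hsep, hcov⟩ := this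
    exact ⟨T, hTy, hcov,
      card_le_of_pairwise_separated hκ hsymm htri hmeas hpos hfin hN hr hTy hsep⟩
  -- otherwise a separated family that fails to cover can always be enlarged, beyond the packing bound
  by_contra! hgrow
  have hcard : ∀ k : ℕ, ∃ T : Finset X, ↑T ⊆ qball d y r ∧
      (↑T : Set X).Pairwise (fun a b => r / (2 * κ) ≤ d a b) ∧ T.card = k := by
    intro k
    induction k with
    | zero => exact ⟨∅, by simp, by simp, rfl⟩
    | succ k ih =>
      obtain ⟨T, hTy, hsep, rfl⟩ := ih
      obtain ⟨x, hxy, hx⟩ := not_subset.1 (hgrow T hTy hsep)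
      have hfar : ∀ t ∈ T, r / (2 * κ) ≤ d t x := fun t ht =>
        not_lt.1 fun h => hx (mem_biUnion (Finset.mem_coe.2 ht) h)
      have hxT : x ∉ T := fun h => (hfar x h).not_gt (by rw [hd0]; exact hs)
      refine ⟨insert x T, ?_, ?_, Finset.card_insert_of_notMem hxT⟩
      · rw [Finset.coe_insert]; exact insert_subset hxy hTy
      · rw [Finset.coe_insert]
        exact hsep.insert fun t ht _ => ⟨hsymm x t ▸ hfar t ht, hfar t ht⟩
  obtain ⟨n, hn⟩ := ENNReal.exists_nat_gt hNtop
  obtain ⟨T, hTy, hsep, rfl⟩ := hcard n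
  exact (card_le_of_pairwise_separated hκ hsymm htri hmeas hpos hfin hN hr hTy hsep).not_gt hn

end Covering

section Amalgam

variable [MeasurableSpace X] {μ : Measure X} {d : X → X → ℝ} {κ : ℝ} {N : ℝ≥0∞}
  {q p α : ℝ≥0∞} {r : ℝ} {f : X → ℂ}

def localNorm (μ : Measure X) (d : X → X → ℝ) (q α : ℝ≥0∞) (r : ℝ) (f : X → ℂ) (y : X) :
    ℝ≥0∞ :=
  μ (qball d y r) ^ (1 / α.toReal - 1 / q.toReal) * eLpNorm ((qball d y r).indicator f) q μ

theorem amalgamNorm_top : amalgamNorm μ d q ∞ α r f = ⨆ y, localNorm μ d q α r f y :=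
  if_pos rfl

theorem amalgamNorm_eq_lintegral (hpos : ∀ x r, 0 < r → 0 < μ (qball d x r))
    (hfin : ∀ x r, μ (qball d x r) < ∞) (hr : 0 < r) (hp0 : p ≠ 0) (hp : p ≠ ∞) :
    amalgamNorm μ d q p α r f =
      (∫⁻ y, localNorm μ d q α r f y ^ p.toReal * (μ (qball d y r))⁻¹ ∂μ) ^ (1 / p.toReal) := by
  have hp' : 0 < p.toReal := toReal_pos hp0 hp
  rw [amalgamNorm, if_neg hp]
  congr 1
  refine lintegral_congr fun y => ?_
  have hV0 : μ (qball d y r) ≠ 0 := (hpos y r hr).ne'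
  calc (μ (qball d y r) ^ (1 / α.toReal - 1 / p.toReal - 1 / q.toReal) *
        eLpNorm ((qball d y r).indicator f) q μ) ^ p.toReal
      = (localNorm μ d q α r f y * μ (qball d y r) ^ (-(1 / p.toReal))) ^ p.toReal := by
        rw [localNorm, mul_right_comm, ← rpow_add _ _ hV0 (hfin y r).ne]
        ring_nf
    _ = _ := by
        rw [mul_rpow_of_nonneg _ _ hp'.le, ← rpow_mul, neg_mul, one_div_mul_cancel hp'.ne',
          rpow_neg_one]

theorem rpow_mul_eLpNorm_indicator_le_amalgamNorm {U : Set X} (hU : MeasurableSet U)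
    (hU0 : μ U ≠ 0) (hUtop : μ U ≠ ∞) (hNtop : N ≠ ∞)
    (hsub : ∀ z ∈ U, U ⊆ qball d z r) (hle : ∀ z ∈ U, μ (qball d z r) ≤ N * μ U)
    (hp0 : p ≠ 0) (hp : p ≠ ∞) (ha : 1 / α.toReal - 1 / p.toReal - 1 / q.toReal ≤ 0) :
    N ^ (1 / α.toReal - 1 / p.toReal - 1 / q.toReal) *
        (μ U ^ (1 / α.toReal - 1 / q.toReal) * eLpNorm (U.indicator f) q μ) ≤
      amalgamNorm μ d q p α r f := by
  set a := 1 / α.toReal - 1 / p.toReal - 1 / q.toReal with hadef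
  have hp' : 0 < p.toReal := toReal_pos hp0 hp
  have key := mul_measure_rpow_le_lintegral_rpow (μ := μ) hU
    (c := (N * μ U) ^ a * eLpNorm (U.indicator f) q μ)
    (g := fun z => μ (qball d z r) ^ a * eLpNorm ((qball d z r).indicator f) q μ)
    (fun z hz => mul_le_mul' (rpow_le_rpow_of_nonpos (hle z hz) ha)
      (eLpNorm_mono fun x => norm_indicator_le_of_subset (hsub z hz) f x)) hp'
  rw [amalgamNorm, if_neg hp]
  refine le_of_eq_of_le ?_ key
  have hb : μ U ^ (1 / α.toReal - 1 / q.toReal) = μ U ^ a * μ U ^ (1 / p.toReal) := by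
    rw [← rpow_add _ _ hU0 hUtop, hadef]; ring_nf
  rw [hb, mul_rpow_of_ne_top hNtop hUtop]
  ring

theorem rpow_mul_eLpNorm_indicator_qball_le (hκ : 1 ≤ κ) (hsymm : ∀ x y, d x y = d y x)
    (htri : ∀ x y z, d x y ≤ κ * (d x z + d z y))
    (hmeas : ∀ x r, MeasurableSet (qball d x r)) (hpos : ∀ x r, 0 < r → 0 < μ (qball d x r))
    (hfin : ∀ x r, μ (qball d x r) < ∞) (hN : MeasureQBallRatioLE μ d (12 * κ ^ 4) N)
    (hN1 : 1 ≤ N) (hNtop : N ≠ ∞) (hq : 1 ≤ q) (hqα : q ≤ α) (hp1 : 1 ≤ p) (hp : p ≠ ∞)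
    (hr : 0 < r) {y t : X} (hyt : d y t < r) :
    μ (qball d y r) ^ (1 / α.toReal - 1 / q.toReal) *
        eLpNorm ((qball d t (r / (2 * κ))).indicator f) q μ ≤
      N ^ 3 * amalgamNorm μ d q p α r f := by
  have hκ0 : 0 < κ := one_pos.trans_le hκ
  set s := r / (2 * κ)
  have hs : 0 < s := by positivity
  set a := 1 / α.toReal - 1 / p.toReal - 1 / q.toReal
  set b := 1 / α.toReal - 1 / q.toReal
  have hαq : 1 / α.toReal ≤ 1 / q.toReal :=
    one_div_toReal_le_one_div_toReal (one_pos.trans_le hq).ne' hqα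
  have hb : b ≤ 0 := sub_nonpos.2 hαq
  have ha : a ≤ 0 := by linarith [(by positivity : 0 ≤ 1 / p.toReal)]
  have hab : -a - b ≤ 3 := by
    linarith [one_div_toReal_le_one hq, one_div_toReal_le_one hp1,
      (by positivity : 0 ≤ 1 / α.toReal)]
  have hN0 : N ≠ 0 := (one_pos.trans_le hN1).ne'
  have hpiece : N ^ a * (μ (qball d t s) ^ b * eLpNorm ((qball d t s).indicator f) q μ) ≤
      amalgamNorm μ d q p α r f :=
    rpow_mul_eLpNorm_indicator_le_amalgamNorm (hmeas t s) (hpos t s hs).ne' (hfin t s).ne hNtop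
      (fun _ hz => qball_div_subset_qball hκ0 hsymm htri hz)
      (fun _ hz => measure_qball_le_of_mem_qball_div hκ htri hN hr hz)
      (one_pos.trans_le hp1).ne' hp ha
  have hWV : μ (qball d t s) ≤ N * μ (qball d y r) := measure_qball_div_le hκ htri hN hr hyt
  have hVb : μ (qball d y r) ^ b ≤ N ^ (-b) * μ (qball d t s) ^ b := by
    calc μ (qball d y r) ^ b ≤ (N⁻¹ * μ (qball d t s)) ^ b :=
          rpow_le_rpow_of_nonpos ((ENNReal.inv_mul_le_iff hN0 hNtop).2 hWV) hb
      _ = N ^ (-b) * μ (qball d t s) ^ b := by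
          rw [mul_rpow_of_ne_top (inv_ne_top.2 hN0) (hfin t s).ne, inv_rpow, rpow_neg]
  calc μ (qball d y r) ^ b * eLpNorm ((qball d t s).indicator f) q μ
      ≤ N ^ (-b) * μ (qball d t s) ^ b * eLpNorm ((qball d t s).indicator f) q μ :=
        mul_le_mul_left hVb _
    _ = N ^ (-a - b) *
          (N ^ a * (μ (qball d t s) ^ b * eLpNorm ((qball d t s).indicator f) q μ)) := by
        rw [← mul_assoc, ← rpow_add _ _ hN0 hNtop, show -a - b + a = -b by ring, mul_assoc]
    _ ≤ N ^ (-a - b) * amalgamNorm μ d q p α r f := mul_le_mul_right hpiece _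
    _ ≤ N ^ 3 * amalgamNorm μ d q p α r f := by
        rw [← rpow_natCast]
        exact mul_le_mul_left (rpow_le_rpow_of_exponent_le hN1 (by push_cast; exact hab)) _

theorem localNorm_le_amalgamNorm (hκ : 1 ≤ κ) (hsymm : ∀ x y, d x y = d y x)
    (hd0 : ∀ x, d x x = 0) (htri : ∀ x y z, d x y ≤ κ * (d x z + d z y))
    (hmeas : ∀ x r, MeasurableSet (qball d x r)) (hpos : ∀ x r, 0 < r → 0 < μ (qball d x r))
    (hfin : ∀ x r, μ (qball d x r) < ∞) (hN : MeasureQBallRatioLE μ d (12 * κ ^ 4) N)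
    (hN1 : 1 ≤ N) (hNtop : N ≠ ∞) (hq : 1 ≤ q) (hqα : q ≤ α) (hp1 : 1 ≤ p) (hp : p ≠ ∞)
    (hf : AEStronglyMeasurable f μ) (hr : 0 < r) (y : X) :
    localNorm μ d q α r f y ≤ N ^ 4 * amalgamNorm μ d q p α r f := by
  obtain ⟨T, hTy, hcov, hcard⟩ :=
    exists_finset_qball_cover hκ hsymm hd0 htri hmeas hpos hfin hN hNtop y hr
  set V := μ (qball d y r) ^ (1 / α.toReal - 1 / q.toReal)
  calc localNorm μ d q α r f y = V * eLpNorm ((qball d y r).indicator f) q μ := rfl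
    _ ≤ V * ∑ t ∈ T, eLpNorm ((qball d t (r / (2 * κ))).indicator f) q μ :=
        mul_le_mul_right
          (eLpNorm_indicator_le_sum_of_subset_biUnion hf (fun t _ => hmeas t _) hcov hq) V
    _ = ∑ t ∈ T, V * eLpNorm ((qball d t (r / (2 * κ))).indicator f) q μ := Finset.mul_sum _ _ _
    _ ≤ ∑ _t ∈ T, N ^ 3 * amalgamNorm μ d q p α r f :=
        Finset.sum_le_sum fun t ht => rpow_mul_eLpNorm_indicator_qball_le hκ hsymm htri hmeas
          hpos hfin hN hN1 hNtop hq hqα hp1 hp hr (hTy ht)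
    _ = T.card * (N ^ 3 * amalgamNorm μ d q p α r f) := by rw [Finset.sum_const, nsmul_eq_mul]
    _ ≤ N * (N ^ 3 * amalgamNorm μ d q p α r f) := mul_le_mul_left hcard _
    _ = N ^ 4 * amalgamNorm μ d q p α r f := by ring

theorem amalgamNorm_le_rpow_mul_rpow (hpos : ∀ x r, 0 < r → 0 < μ (qball d x r))
    (hfin : ∀ x r, μ (qball d x r) < ∞) (hr : 0 < r) {p₁ p₂ : ℝ≥0∞} (hp₁ : p₁ ≠ 0)
    (hp₁₂ : p₁ < p₂) (hp₂ : p₂ ≠ ∞) (hS : amalgamNorm μ d q ∞ α r f ≠ ∞) :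
    amalgamNorm μ d q p₂ α r f ≤ amalgamNorm μ d q ∞ α r f ^ (1 - p₁.toReal / p₂.toReal) *
      amalgamNorm μ d q p₁ α r f ^ (p₁.toReal / p₂.toReal) := by
  have hp₁top : p₁ ≠ ∞ := (hp₁₂.trans_le le_top).ne
  have h₁ : 0 < p₁.toReal := toReal_pos hp₁ hp₁top
  have h₁₂ : p₁.toReal < p₂.toReal := (toReal_lt_toReal hp₁top hp₂).2 hp₁₂
  have h₂ : 0 < p₂.toReal := h₁.trans h₁₂
  have hle : ∀ y, localNorm μ d q α r f y ≤ amalgamNorm μ d q ∞ α r f := fun y =>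
    amalgamNorm_top (μ := μ) ▸ le_iSup (localNorm μ d q α r f) y
  rw [amalgamNorm_eq_lintegral hpos hfin hr (pos_of_gt hp₁₂).ne' hp₂,
    amalgamNorm_eq_lintegral hpos hfin hr hp₁ hp₁top]
  calc _ ≤ (amalgamNorm μ d q ∞ α r f ^ (p₂.toReal - p₁.toReal) *
        ∫⁻ y, localNorm μ d q α r f y ^ p₁.toReal * (μ (qball d y r))⁻¹ ∂μ) ^ (1 / p₂.toReal) :=
        rpow_le_rpow (lintegral_rpow_mul_le hle hS h₁.le h₁₂.le) (by positivity)
    _ = _ := by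
        rw [mul_rpow_of_nonneg _ _ (by positivity), ← rpow_mul, ← rpow_mul]
        congr 2 <;> field_simp

theorem amalgamNorm_le_mul_amalgamNorm_of_lt (hpos : ∀ x r, 0 < r → 0 < μ (qball d x r))
    (hfin : ∀ x r, μ (qball d x r) < ∞) (hr : 0 < r) {p₁ p₂ : ℝ≥0∞} (hp₁ : p₁ ≠ 0)
    (hp₁₂ : p₁ < p₂) (hp₂ : p₂ ≠ ∞) {C : ℝ≥0∞} (hC : 1 ≤ C)
    (hS : amalgamNorm μ d q ∞ α r f ≤ C * amalgamNorm μ d q p₁ α r f) :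
    amalgamNorm μ d q p₂ α r f ≤ C * amalgamNorm μ d q p₁ α r f := by
  by_cases hStop : amalgamNorm μ d q ∞ α r f = ∞
  · rw [hStop, top_le_iff] at hS
    rw [hS]
    exact le_top
  set θ := p₁.toReal / p₂.toReal
  have hθ : 0 ≤ θ := by positivity
  have hθ1 : θ ≤ 1 :=
    div_le_one_of_le₀ (toReal_mono hp₂ hp₁₂.le) toReal_nonneg
  calc amalgamNorm μ d q p₂ α r f
      ≤ amalgamNorm μ d q ∞ α r f ^ (1 - θ) * amalgamNorm μ d q p₁ α r f ^ θ :=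
        amalgamNorm_le_rpow_mul_rpow hpos hfin hr hp₁ hp₁₂ hp₂ hStop
    _ ≤ (C * amalgamNorm μ d q p₁ α r f) ^ (1 - θ) * amalgamNorm μ d q p₁ α r f ^ θ :=
        mul_le_mul_left (rpow_le_rpow hS (sub_nonneg.2 hθ1)) _
    _ = C ^ (1 - θ) * amalgamNorm μ d q p₁ α r f := by
        rw [mul_rpow_of_nonneg _ _ (sub_nonneg.2 hθ1), mul_assoc,
          ← rpow_add_of_nonneg _ _ (sub_nonneg.2 hθ1) hθ, sub_add_cancel, rpow_one]
    _ ≤ C * amalgamNorm μ d q p₁ α r f :=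
        mul_le_mul_left ((rpow_le_rpow_of_exponent_le hC (by linarith)).trans_eq (rpow_one C)) _

end Amalgam

theorem amalgamNorm_mono_p_general [MeasurableSpace X] (μ : Measure X) (d : X → X → ℝ)
    (κ : ℝ) (hκ : 1 ≤ κ)
    (hsymm : ∀ x y, d x y = d y x) (hd0 : ∀ x, d x x = 0)
    (htri : ∀ x y z, d x y ≤ κ * (d x z + d z y))
    (hmeas : ∀ x r, MeasurableSet (qball d x r))
    (hpos : ∀ x r, 0 < r → 0 < μ (qball d x r))
    (hfin : ∀ x r, μ (qball d x r) < ∞)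
    (C' : ℝ) (hC' : 1 < C')
    (hdouble : ∀ x r, 0 < r → μ (qball d x (2 * r)) ≤ ENNReal.ofReal C' * μ (qball d x r))
    (q α p₁ p₂ : ℝ≥0∞) (hq : 1 ≤ q) (hqα : q ≤ α) (hαp₁ : α ≤ p₁) (hp₁₂ : p₁ < p₂)
    (hp₂ : p₂ < ∞) :
    ∃ C Cc : ℝ, 0 < C ∧ 0 < Cc ∧
      ∀ (f : X → ℂ), Measurable f → ∀ r : ℝ, 0 < r →
        amalgamNorm μ d q ∞ α r f ≤ ENNReal.ofReal C * amalgamNorm μ d q p₂ α r f ∧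
        amalgamNorm μ d q p₂ α r f ≤ ENNReal.ofReal Cc * amalgamNorm μ d q p₁ α r f := by
  obtain ⟨m, hm⟩ := pow_unbounded_of_one_lt (12 * κ ^ 4) (one_lt_two (α := ℝ))
  set N := ENNReal.ofReal C' ^ m
  have hN : MeasureQBallRatioLE μ d (12 * κ ^ 4) N := measureQBallRatioLE_of_doubling hdouble hm.le
  have hN1 : 1 ≤ N := one_le_pow₀ (one_le_ofReal.2 hC'.le)
  have hNtop : N ≠ ∞ := pow_ne_top ofReal_ne_top
  have hp₁ : 1 ≤ p₁ := hq.trans (hqα.trans hαp₁)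
  have hsup : ∀ p, 1 ≤ p → p ≠ ∞ → ∀ f : X → ℂ, Measurable f → ∀ r, 0 < r →
      amalgamNorm μ d q ∞ α r f ≤ N ^ 4 * amalgamNorm μ d q p α r f :=
    fun p hp1 hp f hf r hr => amalgamNorm_top (μ := μ) ▸ iSup_le fun y =>
      localNorm_le_amalgamNorm hκ hsymm hd0 htri hmeas hpos hfin hN hN1 hNtop hq hqα hp1 hp
        hf.aestronglyMeasurable hr y
  have hC : ENNReal.ofReal ((C' ^ m) ^ 4) = N ^ 4 := by
    rw [ofReal_pow (by positivity), ofReal_pow (by linarith)]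
  refine ⟨(C' ^ m) ^ 4, (C' ^ m) ^ 4, by positivity, by positivity, fun f hf r hr => ?_⟩
  rw [hC]
  exact ⟨hsup p₂ (hp₁.trans hp₁₂.le) hp₂.ne f hf r hr,
    amalgamNorm_le_mul_amalgamNorm_of_lt hpos hfin hr (one_pos.trans_le hp₁).ne' hp₁₂ hp₂.ne
      (one_le_pow₀ hN1) (hsup p₁ hp₁ (hp₁₂.trans hp₂).ne f hf r hr)⟩

/-- monotonicity (up to constants independent of `r`) of the amalgam
norm in the global exponent. -/
theorem amalgamNorm_mono_p [MeasurableSpace X] (μ : Measure X) (d : X → X → ℝ)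
    (κ : ℝ) (hκ : 1 ≤ κ)
    (hsymm : ∀ x y, d x y = d y x) (hd0 : ∀ x, d x x = 0) (hdnn : ∀ x y, 0 ≤ d x y)
    (htri : ∀ x y z, d x y ≤ κ * (d x z + d z y))
    (hmeas : ∀ x r, MeasurableSet (qball d x r))
    (hpos : ∀ x r, 0 < r → 0 < μ (qball d x r))
    (hfin : ∀ x r, μ (qball d x r) < ∞)
    (hXinf : μ Set.univ = ∞)
    (hsep : ∃ D : Set X, D.Countable ∧ ∀ x : X, ∀ ε : ℝ, 0 < ε → ∃ y ∈ D, d x y < ε)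
    (hann : ∀ x r R, 0 < r → r < R → (qball d x R \ qball d x r).Nonempty)
    (C' : ℝ) (hC' : 1 < C')
    (hdouble : ∀ x r, 0 < r → μ (qball d x (2 * r)) ≤ ENNReal.ofReal C' * μ (qball d x r))
    (q α p₁ p₂ : ℝ≥0∞) (hq : 1 ≤ q) (hqα : q ≤ α) (hαp₁ : α ≤ p₁) (hp₁₂ : p₁ < p₂)
    (hp₂ : p₂ < ∞) :
    ∃ C Cc : ℝ, 0 < C ∧ 0 < Cc ∧
      ∀ (f : X → ℂ), Measurable f → ∀ r : ℝ, 0 < r →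
        amalgamNorm μ d q ∞ α r f ≤ ENNReal.ofReal C * amalgamNorm μ d q p₂ α r f ∧
        amalgamNorm μ d q p₂ α r f ≤ ENNReal.ofReal Cc * amalgamNorm μ d q p₁ α r f :=
  amalgamNorm_mono_p_general μ d κ hκ hsymm hd0 htri hmeas hpos hfin C' hC' hdouble q α p₁ p₂ hq hqα
    hαp₁ hp₁₂ hp₂
end
end

section
/- (Kolmogorov-type counting estimate.) Let (X,d,μ) be a space of homogeneous type with comparison μ(B(x,r)) ≍ φ(r) uniformly in x (i.e. a·φ(r) ≤ μ(B(x,r)) ≤ b·φ(r) for fixed constants 0 < a ≤ b < ∞ and a nondecreasing φ). Let 1 ≤ q < α, let {E_j} be a pairwise disjoint family of measurable sets each contained in a ball of radius ρ^{m+1} and containing a ball of radius ρ^m (so μ(E_j) ≍ φ(ρ^{m+1})), and let f satisfy A := sup_{α'>0} α' μ({|f| > α'})^{1/α} < ∞. Then there exists C > 0 depending only on α, q, a, b such that for every λ > 0, #{ j : ∫_{E_j} |f|^q dμ > λ } ≤ C φ(ρ^{m+1})^{α/q − 1} λ^{−α/q} A^α. -/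
/-!
Layer cake: `∫_E |f|^q = q ∫_0^∞ t^(q-1) μ(E ∩ {|f| > t}) dt`. Bounding the tail measure by `μ E`
below a height `T` and by the weak-type bound `A^α t^(-α)` above it, and choosing `T` to balance
the two pieces, gives Kolmogorov's inequality `∫_E |f|^q ≤ α/(α-q) A^q μ(E)^(1-q/α)`.
If `N` disjoint sets `E_j`, each of measure at most `M ≤ b φ(ρ^(m+1))`, carry `∫_{E_j} |f|^q > λ`,
Kolmogorov's inequality on their union gives `N λ ≤ α/(α-q) A^q (N M)^(1-q/α)`; since `q < α`
this bounds `N^(q/α)`, hence `N`.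
-/

open MeasureTheory Set ENNReal Filter

noncomputable section

variable {X : Type*}

theorem lintegral_Ioc_zero_rpow_sub_one {q : ℝ} (hq : 0 < q) {T : ℝ} (hT : 0 ≤ T) :
    ∫⁻ t in Ioc 0 T, ENNReal.ofReal (t ^ (q - 1)) = ENNReal.ofReal (T ^ q / q) := by
  have hint : IntegrableOn (fun t : ℝ => t ^ (q - 1)) (Ioc 0 T) :=
    (intervalIntegrable_iff_integrableOn_Ioc_of_le hT).1
      (intervalIntegral.intervalIntegrable_rpow' (by linarith))
  rw [← ofReal_integral_eq_lintegral_ofReal hint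
      (ae_restrict_of_forall_mem measurableSet_Ioc fun t ht => Real.rpow_nonneg ht.1.le _),
    ← intervalIntegral.integral_of_le hT, integral_rpow (Or.inl (by linarith))]
  simp [Real.zero_rpow hq.ne']

theorem lintegral_Ioi_rpow_of_lt {a c : ℝ} (ha : a < -1) (hc : 0 < c) :
    ∫⁻ t in Ioi c, ENNReal.ofReal (t ^ a) = ENNReal.ofReal (-c ^ (a + 1) / (a + 1)) := by
  rw [← ofReal_integral_eq_lintegral_ofReal (integrableOn_Ioi_rpow_of_lt ha hc)
      (ae_restrict_of_forall_mem measurableSet_Ioi fun t ht => Real.rpow_nonneg (hc.trans ht).le _),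
    integral_Ioi_rpow_of_lt ha hc]

section WeakType

variable [MeasurableSpace X] {μ : Measure X} {E : Type*} [SeminormedAddCommGroup E] {f : X → E}
  {q α : ℝ} {A : ℝ≥0∞}

theorem measure_norm_gt_le_of_weak (hα : 0 < α)
    (hA : ∀ l : ℝ, 0 < l → ENNReal.ofReal l * μ {x | l < ‖f x‖} ^ (1 / α) ≤ A)
    {l : ℝ} (hl : 0 < l) :
    μ {x | l < ‖f x‖} ≤ A ^ α * ENNReal.ofReal (l ^ (-α)) := by
  have hpow := ENNReal.rpow_le_rpow (hA l hl) hα.le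
  rw [ENNReal.mul_rpow_of_nonneg _ _ hα.le, ← ENNReal.rpow_mul, one_div_mul_cancel hα.ne',
    ENNReal.rpow_one, ENNReal.ofReal_rpow_of_pos hl] at hpow
  have hlα : 0 < l ^ α := Real.rpow_pos_of_pos hl α
  rwa [Real.rpow_neg hl.le, ENNReal.ofReal_inv_of_pos hlα, ← div_eq_mul_inv,
    ENNReal.le_div_iff_mul_le (Or.inl (ENNReal.ofReal_pos.2 hlα).ne')
      (Or.inl ENNReal.ofReal_ne_top), mul_comm]

theorem setLIntegral_enorm_rpow_eq_lintegral_meas_lt_mul (hf : AEStronglyMeasurable f μ)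
    (hq : 0 < q) (s : Set X) :
    ∫⁻ x in s, ‖f x‖ₑ ^ q ∂μ = ENNReal.ofReal q *
      ∫⁻ t in Ioi 0, μ.restrict s {x | t < ‖f x‖} * ENNReal.ofReal (t ^ (q - 1)) := by
  rw [← lintegral_rpow_eq_lintegral_meas_lt_mul _
    (Eventually.of_forall fun x => norm_nonneg _) hf.norm.aemeasurable.restrict hq]
  refine lintegral_congr fun x => ?_
  rw [← ofReal_norm, ENNReal.ofReal_rpow_of_nonneg (norm_nonneg _) hq.le]

theorem setLIntegral_enorm_rpow_eq_zero_of_weak_zero (hf : AEStronglyMeasurable f μ)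
    (hq : 0 < q) (hα : 0 < α)
    (hA : ∀ l : ℝ, 0 < l → ENNReal.ofReal l * μ {x | l < ‖f x‖} ^ (1 / α) ≤ 0) (s : Set X) :
    ∫⁻ x in s, ‖f x‖ₑ ^ q ∂μ = 0 := by
  have htail t (ht : 0 < t) : μ.restrict s {x | t < ‖f x‖} = 0 :=
    le_antisymm ((Measure.restrict_apply_le _ _).trans
      ((measure_norm_gt_le_of_weak hα hA ht).trans_eq (by simp [zero_rpow_of_pos hα])))
      zero_le
  rw [setLIntegral_enorm_rpow_eq_lintegral_meas_lt_mul hf hq,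
    setLIntegral_congr_fun measurableSet_Ioi fun t ht => by rw [htail t ht, zero_mul],
    lintegral_zero, mul_zero]

theorem setLIntegral_enorm_rpow_le_add_of_weak (hf : AEStronglyMeasurable f μ) (hq : 0 < q)
    (hqα : q < α) (hA : ∀ l : ℝ, 0 < l → ENNReal.ofReal l * μ {x | l < ‖f x‖} ^ (1 / α) ≤ A)
    (s : Set X) {T : ℝ} (hT : 0 < T) :
    ∫⁻ x in s, ‖f x‖ₑ ^ q ∂μ ≤ ENNReal.ofReal (T ^ q) * μ s
      + ENNReal.ofReal (q / (α - q)) * A ^ α * ENNReal.ofReal (T ^ (q - α)) := by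
  have small_values :
      ∫⁻ t in Ioc 0 T, μ.restrict s {x | t < ‖f x‖} * ENNReal.ofReal (t ^ (q - 1))
        ≤ μ s * ENNReal.ofReal (T ^ q / q) :=
    calc _ ≤ ∫⁻ t in Ioc 0 T, μ s * ENNReal.ofReal (t ^ (q - 1)) := by
          refine lintegral_mono fun t => mul_le_mul_left ?_ _
          simpa using measure_mono (μ := μ.restrict s) (subset_univ {x | t < ‖f x‖})
      _ = _ := by
          rw [lintegral_const_mul _ (by fun_prop), lintegral_Ioc_zero_rpow_sub_one hq hT.le]
  have large_values :
      ∫⁻ t in Ioi T, μ.restrict s {x | t < ‖f x‖} * ENNReal.ofReal (t ^ (q - 1))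
        ≤ A ^ α * ENNReal.ofReal (T ^ (q - α) / (α - q)) :=
    calc _ ≤ ∫⁻ t in Ioi T, A ^ α * ENNReal.ofReal (t ^ (q - 1 - α)) := by
          refine setLIntegral_mono' measurableSet_Ioi fun t ht => ?_
          have ht0 : 0 < t := hT.trans ht
          calc μ.restrict s {x | t < ‖f x‖} * ENNReal.ofReal (t ^ (q - 1))
              ≤ A ^ α * ENNReal.ofReal (t ^ (-α)) * ENNReal.ofReal (t ^ (q - 1)) := by
                gcongr
                exact (Measure.restrict_apply_le _ _).trans
                  (measure_norm_gt_le_of_weak (hq.trans hqα) hA ht0)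
            _ = A ^ α * ENNReal.ofReal (t ^ (q - 1 - α)) := by
                rw [mul_assoc, ← ENNReal.ofReal_mul (by positivity), ← Real.rpow_add ht0]
                ring_nf
      _ = _ := by
          rw [lintegral_const_mul _ (by fun_prop), lintegral_Ioi_rpow_of_lt (by linarith) hT,
            show q - 1 - α + 1 = q - α by ring, neg_div, ← div_neg, neg_sub]
  rw [setLIntegral_enorm_rpow_eq_lintegral_meas_lt_mul hf hq, ← Ioc_union_Ioi_eq_Ioi hT.le,
    lintegral_union measurableSet_Ioi Ioc_disjoint_Ioi_same]
  calc _ ≤ ENNReal.ofReal q * (μ s * ENNReal.ofReal (T ^ q / q)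
        + A ^ α * ENNReal.ofReal (T ^ (q - α) / (α - q))) := by gcongr
    _ = μ s * (ENNReal.ofReal q * ENNReal.ofReal (T ^ q / q))
        + A ^ α * (ENNReal.ofReal q * ENNReal.ofReal (T ^ (q - α) / (α - q))) := by ring
    _ = _ := by
      rw [← ENNReal.ofReal_mul hq.le, ← ENNReal.ofReal_mul hq.le, mul_div_cancel₀ _ hq.ne',
        mul_div_left_comm, ENNReal.ofReal_mul (by positivity)]
      ring

theorem setLIntegral_enorm_rpow_le_kolmogorov (hf : AEStronglyMeasurable f μ) (hq : 0 < q)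
    (hqα : q < α) (hA_top : A ≠ ∞)
    (hA : ∀ l : ℝ, 0 < l → ENNReal.ofReal l * μ {x | l < ‖f x‖} ^ (1 / α) ≤ A)
    {s : Set X} (hs : μ s ≠ ∞) :
    ∫⁻ x in s, ‖f x‖ₑ ^ q ∂μ ≤ ENNReal.ofReal (α / (α - q)) * A ^ q * μ s ^ (1 - q / α) := by
  have hα : 0 < α := hq.trans hqα
  rcases eq_or_ne (μ s) 0 with hs0 | hs0
  · simp [Measure.restrict_eq_zero.2 hs0]
  rcases eq_or_ne A 0 with rfl | hA0
  · simp [setLIntegral_enorm_rpow_eq_zero_of_weak_zero hf hq hα hA s, zero_rpow_of_pos hq]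
  obtain ⟨a, ha, rfl⟩ : ∃ a, 0 < a ∧ A = ENNReal.ofReal a :=
    ⟨A.toReal, ENNReal.toReal_pos hA0 hA_top, (ENNReal.ofReal_toReal hA_top).symm⟩
  obtain ⟨m, hm, hms⟩ : ∃ m, 0 < m ∧ μ s = ENNReal.ofReal m :=
    ⟨(μ s).toReal, ENNReal.toReal_pos hs0 hs, (ENNReal.ofReal_toReal hs).symm⟩
  -- the two terms of the truncated bound balance at `T ^ α = A ^ α / μ s`
  refine (setLIntegral_enorm_rpow_le_add_of_weak hf hq hqα hA s
    (T := a * m ^ (-1 / α)) (by positivity)).trans_eq ?_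
  rw [hms, ENNReal.ofReal_rpow_of_pos ha, ENNReal.ofReal_rpow_of_pos ha,
    ENNReal.ofReal_rpow_of_pos hm, ← ENNReal.ofReal_mul (by positivity),
    ← ENNReal.ofReal_mul (by positivity), ← ENNReal.ofReal_mul (by positivity),
    ← ENNReal.ofReal_mul (by positivity), ← ENNReal.ofReal_mul (by positivity),
    ← ENNReal.ofReal_add (by positivity) (by positivity)]
  congr 1
  have hT_q : (a * m ^ (-1 / α)) ^ q * m = a ^ q * m ^ (1 - q / α) := by
    rw [Real.mul_rpow ha.le (by positivity), ← Real.rpow_mul hm.le, mul_assoc,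
      ← Real.rpow_add_one hm.ne']
    ring_nf
  have hT_qα : a ^ α * (a * m ^ (-1 / α)) ^ (q - α) = a ^ q * m ^ (1 - q / α) := by
    rw [Real.mul_rpow ha.le (by positivity), ← Real.rpow_mul hm.le, ← mul_assoc,
      ← Real.rpow_add ha]
    congr 2
    · ring
    · field_simp
      ring
  rw [mul_assoc (q / (α - q)), hT_q, hT_qα]
  field_simp [(sub_pos.2 hqα).ne']
  ring

end WeakType

section Counting

variable [MeasurableSpace X] {μ : Measure X}

theorem card_le_of_lt_setLIntegral {ι : Type*} {F : X → ℝ≥0∞} {K M lam : ℝ≥0∞} {p : ℝ}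
    (hp : 0 < p) (hp1 : p ≤ 1) (hF : ∀ s, μ s ≠ ∞ → ∫⁻ x in s, F x ∂μ ≤ K * μ s ^ (1 - p))
    {E : ι → Set X} (hE : ∀ j, MeasurableSet (E j))
    (hdisj : Pairwise (Function.onFun Disjoint E))
    (hM : ∀ j, μ (E j) ≤ M) (hM_top : M ≠ ∞) (hlam : lam ≠ 0) (hlam_top : lam ≠ ∞)
    {S : Finset ι} (hS : ∀ j ∈ S, lam < ∫⁻ x in E j, F x ∂μ) :
    (S.card : ℝ≥0∞) ≤ (K * M ^ (1 - p) / lam) ^ p⁻¹ := by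
  set N : ℝ≥0∞ := (S.card : ℝ≥0∞)
  rcases eq_or_ne N 0 with hN0 | hN0
  · simp [hN0]
  have hN_top : N ≠ ∞ := natCast_ne_top _
  have h1p : 0 ≤ 1 - p := sub_nonneg.2 hp1
  have hU : μ (⋃ j ∈ S, E j) ≤ N * M :=
    (measure_biUnion_finset_le S E).trans
      (by simpa using Finset.sum_le_card_nsmul S _ M fun j _ => hM j)
  have lower : N * lam ≤ ∫⁻ x in ⋃ j ∈ S, E j, F x ∂μ := by
    rw [lintegral_biUnion_finset (fun i _ j _ hij => hdisj hij) fun j _ => hE j]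
    simpa using Finset.card_nsmul_le_sum S _ lam fun j hj => (hS j hj).le
  have upper : ∫⁻ x in ⋃ j ∈ S, E j, F x ∂μ ≤ K * M ^ (1 - p) * N ^ (1 - p) := by
    refine (hF _ (ne_top_of_le_ne_top (mul_ne_top hN_top hM_top) hU)).trans ?_
    rw [mul_assoc, ← ENNReal.mul_rpow_of_nonneg _ _ h1p, mul_comm M]
    gcongr
  have hN_split : N = N ^ p * N ^ (1 - p) := by
    rw [← ENNReal.rpow_add _ _ hN0 hN_top, add_sub_cancel, ENNReal.rpow_one]
  have key : N ^ p * lam ≤ K * M ^ (1 - p) := by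
    rw [← ENNReal.mul_le_mul_iff_left (ENNReal.rpow_pos (pos_iff_ne_zero.2 hN0) hN_top).ne'
      (ENNReal.rpow_ne_top_of_nonneg h1p hN_top), mul_right_comm, ← hN_split]
    exact lower.trans upper
  rwa [ENNReal.le_rpow_inv_iff hp, ENNReal.le_div_iff_mul_le (Or.inl hlam) (Or.inl hlam_top)]

end Counting

theorem kolmogorov_counting_general [MeasurableSpace X] (μ : Measure X) (d : X → X → ℝ) (φ : ℝ → ℝ)
    (a b : ℝ) (ha : 0 < a) (hab : a ≤ b)
    (hφ : ∀ (x : X) (r : ℝ), 0 < r →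
      ENNReal.ofReal (a * φ r) ≤ μ (qball d x r) ∧
      μ (qball d x r) ≤ ENNReal.ofReal (b * φ r))
    (q α : ℝ) (hq : 1 ≤ q) (hqα : q < α) :
    ∃ C : ℝ, 0 < C ∧
      ∀ (ρ : ℝ), 1 < ρ → ∀ (m : ℤ),
      ∀ (E : ℕ → Set X), (∀ j, MeasurableSet (E j)) →
        Pairwise (Function.onFun Disjoint E) →
        (∀ j, ∃ z z' : X, qball d z (ρ ^ m) ⊆ E j ∧ E j ⊆ qball d z' (ρ ^ (m + 1))) →
      ∀ (f : X → ℂ), Measurable f →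
      ∀ A : ℝ≥0∞, A ≠ ∞ →
        (∀ l : ℝ, 0 < l → ENNReal.ofReal l * (μ {x | l < ‖f x‖}) ^ (1 / α) ≤ A) →
      ∀ lam : ℝ, 0 < lam →
      ∀ S : Finset ℕ, (∀ j ∈ S, ENNReal.ofReal lam < ∫⁻ x in E j, (‖f x‖₊ : ℝ≥0∞) ^ q ∂μ) →
        (S.card : ℝ≥0∞) ≤
          ENNReal.ofReal (C * φ (ρ ^ (m + 1)) ^ (α / q - 1) * lam ^ (-(α / q))) * A ^ α := by
  have hq0 : 0 < q := by linarith
  have hα : 0 < α := hq0.trans hqα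
  have hb : 0 < b := ha.trans_le hab
  have hc : 0 < α / (α - q) := div_pos hα (sub_pos.2 hqα)
  refine ⟨(α / (α - q)) ^ (α / q) * b ^ (α / q - 1), by positivity, ?_⟩
  intro ρ hρ m E hE hdisj hEball f hf A hA_top hA lam hlam S hS
  have hr : 0 < ρ ^ (m + 1) := zpow_pos (by linarith) _
  have hM j : μ (E j) ≤ ENNReal.ofReal (b * φ (ρ ^ (m + 1))) := by
    obtain ⟨-, z', -, hsub⟩ := hEball j
    exact (measure_mono hsub).trans (hφ z' _ hr).2
  have hcount := card_le_of_lt_setLIntegral (div_pos hq0 hα) (div_le_one_of_le₀ hqα.le hα.le)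
    (fun _ hs => setLIntegral_enorm_rpow_le_kolmogorov hf.aestronglyMeasurable hq0 hqα hA_top hA
      hs) hE hdisj hM ofReal_ne_top (ofReal_pos.2 hlam).ne' ofReal_ne_top hS
  rcases le_or_gt (φ (ρ ^ (m + 1))) 0 with hφ0 | hφ0
  · simp [ofReal_eq_zero.2 (mul_nonpos_of_nonneg_of_nonpos hb.le hφ0),
      zero_rpow_of_pos (sub_pos.2 ((div_lt_one hα).2 hqα)), zero_rpow_of_pos (div_pos hα hq0)]
      at hcount
    simp [hcount]
  refine hcount.trans_eq ?_
  rw [div_eq_mul_inv, mul_right_comm _ (A ^ q), mul_right_comm _ (A ^ q),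
    ENNReal.mul_rpow_of_nonneg _ _ (by positivity), ← ENNReal.rpow_mul, inv_div,
    mul_div_cancel₀ _ hq0.ne', ENNReal.ofReal_rpow_of_pos (by positivity),
    ← ENNReal.ofReal_inv_of_pos hlam, ← ENNReal.ofReal_mul (by positivity),
    ← ENNReal.ofReal_mul (by positivity),
    ENNReal.ofReal_rpow_of_nonneg (by positivity) (by positivity)]
  congr 2
  rw [Real.mul_rpow (by positivity) (by positivity), Real.mul_rpow hc.le (by positivity),
    ← Real.rpow_mul (by positivity), Real.inv_rpow hlam.le, ← Real.rpow_neg hlam.le,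
    Real.mul_rpow hb.le hφ0.le, show (1 - q / α) * (α / q) = α / q - 1 by field_simp]
  ring

/-- Kolmogorov-type counting estimate. -/
theorem kolmogorov_counting [MeasurableSpace X] (μ : Measure X) (d : X → X → ℝ)
    (κ : ℝ) (hκ : 1 ≤ κ)
    (hsymm : ∀ x y, d x y = d y x) (hd0 : ∀ x, d x x = 0) (hdnn : ∀ x y, 0 ≤ d x y)
    (htri : ∀ x y z, d x y ≤ κ * (d x z + d z y))
    (hmeas : ∀ x r, MeasurableSet (qball d x r))
    (φ : ℝ → ℝ) (hφmono : Monotone φ)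
    (a b : ℝ) (ha : 0 < a) (hab : a ≤ b)
    (hφ : ∀ (x : X) (r : ℝ), 0 < r →
      ENNReal.ofReal (a * φ r) ≤ μ (qball d x r) ∧
      μ (qball d x r) ≤ ENNReal.ofReal (b * φ r))
    (q α : ℝ) (hq : 1 ≤ q) (hqα : q < α) :
    ∃ C : ℝ, 0 < C ∧
      ∀ (ρ : ℝ), 1 < ρ → ∀ (m : ℤ),
      ∀ (E : ℕ → Set X), (∀ j, MeasurableSet (E j)) →
        Pairwise (Function.onFun Disjoint E) →
        (∀ j, ∃ z z' : X, qball d z (ρ ^ m) ⊆ E j ∧ E j ⊆ qball d z' (ρ ^ (m + 1))) →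
      ∀ (f : X → ℂ), Measurable f →
      ∀ A : ℝ≥0∞, A ≠ ∞ →
        (∀ l : ℝ, 0 < l → ENNReal.ofReal l * (μ {x | l < ‖f x‖}) ^ (1 / α) ≤ A) →
      ∀ lam : ℝ, 0 < lam →
      ∀ S : Finset ℕ, (∀ j ∈ S, ENNReal.ofReal lam < ∫⁻ x in E j, (‖f x‖₊ : ℝ≥0∞) ^ q ∂μ) →
        (S.card : ℝ≥0∞) ≤
          ENNReal.ofReal (C * φ (ρ ^ (m + 1)) ^ (α / q - 1) * lam ^ (-(α / q))) * A ^ α :=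
  kolmogorov_counting_general μ d φ a b ha hab hφ q α hq hqα
end
end
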